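/- arXiv:1301.6665 — 2 statements merged into one kernel-verified Lean document; each statement's English description precedes it below -/
import Mathlib

section
/- For every n ∈ ℕ, the subset V_n = {χ ∈ Sp C | deg χ ≤ n} is closed in Sp C. -/
/-!
Fix a character `χ`. Postcomposing `c : A ⟶ Y` with `u : Y ⟶ Z` never decreases
`χ.eval c = χ A - χ Y + χ (coker c)`: the increment is `χ.eval α` for
`α = (u, coker c) : Y ⟶ Z ⊞ coker c`. Let `ascentRank χ A` be the largest number of strict
increases along a chain `𝟙 A, c₁, c₂, …` of successive composites. Pushouts along right exact
sequences make `ascentRank χ` and `χ - ascentRank χ` characters, and the first is nonzero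
when `χ` is, so an irreducible `χ` equals its ascent rank. A chain realising `χ X` then
certifies `χ' X ≥ χ X` for every `χ'` in the finite intersection of the basic open sets `U_α`
of its strict steps. So `χ ↦ χ X` is lower semicontinuous on `Sp C`, and so is the degree,
a finite sum of such functions.
-/

open CategoryTheory CategoryTheory.Limits ZeroObject

universe w v u

namespace BrauerThrall

/-- A character for an additive category `D` (with zero morphisms):
a function on objects, additive on biproducts and subadditive on
right exact sequences `X → Y → Z → 0` (`Z` a cokernel of `X → Y`). -/
structure Character (D : Type u) [Category.{v} D] [HasZeroMorphisms D] where
  toFun : D → ℕ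
  additive : ∀ (X Y : D) (b : BinaryBicone X Y), b.IsBilimit → toFun b.pt = toFun X + toFun Y
  subadditive : ∀ ⦃X Y : D⦄ (f : X ⟶ Y) (c : CokernelCofork f), IsColimit c →
    toFun Y ≤ toFun X + toFun c.pt

variable {D : Type u} [Category.{v} D] [HasZeroMorphisms D]

/-- A character is irreducible if it is nonzero and not the sum of two nonzero characters. -/
def Character.IsIrreducible (χ : Character D) : Prop :=
  χ.toFun ≠ 0 ∧ ¬ ∃ φ ψ : Character D, φ.toFun ≠ 0 ∧ ψ.toFun ≠ 0 ∧
    ∀ X : D, χ.toFun X = φ.toFun X + ψ.toFun X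

/-- `Sp D`, the set of irreducible characters. -/
def Sp (D : Type u) [Category.{v} D] [HasZeroMorphisms D] : Type u :=
  {χ : Character D // χ.IsIrreducible}

variable {C : Type u} [Category.{v} C] [Abelian C]

/-- For a morphism `α : X ⟶ Y`, `χ(α) = χ(X) - χ(Y) + χ(Coker α)`. -/
noncomputable def Character.eval (χ : Character C) {X Y : C} (α : X ⟶ Y) : ℤ :=
  (χ.toFun X : ℤ) - χ.toFun Y + χ.toFun (cokernel α)

variable (C) in
/-- The basic open subsets `U_α` of `Sp C`. -/
def spBasis : Set (Set (Sp C)) :=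
  {U | ∃ (X Y : C) (α : X ⟶ Y), U = {χ : Sp C | χ.1.eval α ≠ 0}}

variable (C) in
/-- The Ziegler-type topology on `Sp C`, generated by the sets `U_α`. -/
noncomputable def spTopology : TopologicalSpace (Sp C) :=
  TopologicalSpace.generateFrom (spBasis C)

/-- `χ` is the character `χ_M` of the object `M`, i.e. `χ(X)` is the length of
`Hom(X, M)` as a module over `End(M)` (the length of a module being the
supremum of the lengths of chains of submodules). -/
def IsCharOf (χ : Character C) (M : C) : Prop :=
  ∀ X : C, ((χ.toFun X : ℕ∞) : WithBot ℕ∞) = Order.krullDim (Submodule (End M) (X ⟶ M))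

/-- A morphism `φ : M ⟶ N` is left almost split if it is not a split monomorphism and
every non-split-monomorphism out of `M` factors through it. -/
def IsLeftAlmostSplit {M N : C} (φ : M ⟶ N) : Prop :=
  ¬ IsSplitMono φ ∧ ∀ (N' : C) (g : M ⟶ N'), ¬ IsSplitMono g → ∃ h : N ⟶ N', φ ≫ h = g

variable (C) in
/-- The standard hypotheses: `C` is a length category (all objects are noetherian and
artinian), `Hom`-finite over `k`, with finitely many simple objects up to isomorphism. -/
def LengthCategory (k : Type w) [CommRing k] [Linear k C] : Prop :=
  (∀ X : C, IsNoetherianObject X) ∧ (∀ X : C, IsArtinianObject X) ∧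
  (∀ X Y : C, IsFiniteLength k (X ⟶ Y)) ∧
  (∃ (n : ℕ) (f : Fin n → C), ∀ X : C, Simple X → ∃ i, Nonempty (X ≅ f i))

noncomputable def isColimitPushoutInl {A B Y : D} {f : A ⟶ B} {c : CokernelCofork f}
    (hc : IsColimit c) (g : B ⟶ Y) [HasPushout g c.π] :
    IsColimit (CokernelCofork.ofπ (f := f ≫ g) (pushout.inl g c.π)
      (by rw [Category.assoc, pushout.condition, ← Category.assoc, c.condition, zero_comp])) :=
  have : Epi c.π := epi_of_isColimit_cofork hc
  CokernelCofork.IsColimit.ofπ' _ _ fun {T} k hk =>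
    let τ := CokernelCofork.IsColimit.desc' hc (g ≫ k) (by rw [← Category.assoc, hk])
    ⟨pushout.desc k τ.1 τ.2.symm, pushout.inl_desc _ _ _⟩

lemma exists_pushout_inr_comp {E : Type*} [Category E] {A W W' B : E}
    (a : A ⟶ W) (u : W ⟶ W') (f : A ⟶ B) [HasPushout a f] [HasPushout (a ≫ u) f] :
    ∃ k : pushout a f ⟶ pushout (a ≫ u) f, pushout.inr (a ≫ u) f = pushout.inr a f ≫ k :=
  ⟨pushout.desc (u ≫ pushout.inl (a ≫ u) f) (pushout.inr (a ≫ u) f)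
    (by rw [← Category.assoc, pushout.condition]), (pushout.inr_desc _ _ _).symm⟩

namespace Character

variable (χ : Character C)

lemma toFun_zero : χ.toFun 0 = 0 := by
  have h := χ.additive 0 0
    { pt := 0, fst := 0, snd := 0, inl := 0, inr := 0,
      inl_fst := (isZero_zero C).eq_of_src _ _, inl_snd := (isZero_zero C).eq_of_src _ _,
      inr_fst := (isZero_zero C).eq_of_src _ _, inr_snd := (isZero_zero C).eq_of_src _ _ }
    (isBinaryBilimitOfTotal _ ((isZero_zero C).eq_of_src _ _))
  dsimp only at h
  omega

lemma toFun_congr {A B : C} (e : A ≅ B) : χ.toFun A = χ.toFun B := by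
  have h := χ.additive A 0
    { pt := B, fst := e.inv, snd := 0, inl := e.hom, inr := 0,
      inl_fst := e.hom_inv_id, inl_snd := by simp,
      inr_fst := (isZero_zero C).eq_of_src _ _, inr_snd := (isZero_zero C).eq_of_src _ _ }
    (isBinaryBilimitOfTotal _ (by simp))
  dsimp only at h
  rw [h, χ.toFun_zero, add_zero]

lemma toFun_biprod (A B : C) : χ.toFun (A ⊞ B) = χ.toFun A + χ.toFun B :=
  χ.additive A B _ (BinaryBiproduct.isBilimit A B)

lemma toFun_cokernel {A B : C} {f : A ⟶ B} {c : CokernelCofork f} (hc : IsColimit c) :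
    χ.toFun (cokernel f) = χ.toFun c.pt :=
  χ.toFun_congr ((cokernelIsCokernel f).coconePointUniqueUpToIso hc)

lemma toFun_le_of_epi {A B : C} (p : A ⟶ B) [Epi p] : χ.toFun B ≤ χ.toFun A := by
  have h := χ.subadditive p _ (cokernelIsCokernel p)
  rwa [Cofork.ofπ_pt, χ.toFun_congr (cokernel.ofEpi p), χ.toFun_zero, add_zero] at h

lemma eval_eq_of_isColimit {A B : C} {f : A ⟶ B} {c : CokernelCofork f} (hc : IsColimit c) :
    χ.eval f = (χ.toFun A : ℤ) - χ.toFun B + χ.toFun c.pt := by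
  rw [eval, χ.toFun_cokernel hc]

lemma eval_nonneg {A B : C} (f : A ⟶ B) : 0 ≤ χ.eval f := by
  have h := χ.subadditive f _ (cokernelIsCokernel f)
  rw [Cofork.ofπ_pt] at h
  unfold eval
  omega

lemma eval_le {A B : C} (f : A ⟶ B) : χ.eval f ≤ χ.toFun A := by
  have h := χ.toFun_le_of_epi (cokernel.π f)
  unfold eval
  omega

lemma eval_of_epi {A B : C} (p : A ⟶ B) [Epi p] :
    χ.eval p = (χ.toFun A : ℤ) - χ.toFun B := by
  rw [eval, χ.toFun_congr (cokernel.ofEpi p), χ.toFun_zero, Nat.cast_zero, add_zero]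

lemma eval_id (A : C) : χ.eval (𝟙 A) = 0 := by
  rw [χ.eval_of_epi, sub_self]

lemma eval_epi_comp {A B Z : C} (q : A ⟶ B) [Epi q] (d : B ⟶ Z) :
    χ.eval (q ≫ d) = χ.eval q + χ.eval d := by
  rw [χ.eval_of_epi q, eval, eval, χ.toFun_congr (cokernelEpiComp q d)]
  ring

lemma toFun_cokernel_lift_neg {A W B : C} (a : A ⟶ W) (b : A ⟶ B) :
    χ.toFun (cokernel (biprod.lift a (-b))) = χ.toFun (cokernel (biprod.lift a b)) := by
  have hneg : biprod.lift a b ≫ biprod.map (𝟙 W) (-𝟙 B) = biprod.lift a (-b) := by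
    apply biprod.hom_ext <;> simp
  have : IsIso (biprod.map (𝟙 W) (-𝟙 B)) :=
    ⟨biprod.map (𝟙 W) (-𝟙 B), by apply biprod.hom_ext' <;> simp,
      by apply biprod.hom_ext' <;> simp⟩
  rw [← χ.toFun_congr (cokernelIsoOfEq hneg), χ.toFun_congr (cokernelCompIsIso _ _)]

lemma toFun_pushout {A W B : C} (a : A ⟶ W) (b : A ⟶ B) :
    χ.toFun (pushout a b) = χ.toFun (cokernel (biprod.lift a b)) := by
  rw [← χ.toFun_cokernel_lift_neg,
    χ.toFun_cokernel (Abelian.BiproductToPushoutIsCokernel.isColimitBiproductToPushout a b)]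
  rfl

lemma toFun_cokernel_pushout_inr {A W B : C} (a : A ⟶ W) (b : A ⟶ B) :
    χ.toFun (cokernel (pushout.inr a b)) = χ.toFun (cokernel a) := by
  have := isIso_cokernel_map_of_isPushout (IsPushout.of_hasPushout a b)
  exact (χ.toFun_congr (asIso (cokernel.map _ _ _ _ (IsPushout.of_hasPushout a b).w))).symm

lemma toFun_cokernel_comp {A B Y : C} {f : A ⟶ B} {c : CokernelCofork f} (hc : IsColimit c)
    (g : B ⟶ Y) : χ.toFun (cokernel (f ≫ g)) = χ.toFun (pushout g c.π) :=
  χ.toFun_cokernel (isColimitPushoutInl hc g)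

lemma eval_comp {A Y Z : C} (u : A ⟶ Y) (v : Y ⟶ Z) :
    χ.eval (u ≫ v) = χ.eval u + χ.eval (biprod.lift v (cokernel.π u)) := by
  have h : χ.toFun (cokernel (u ≫ v)) = χ.toFun (cokernel (biprod.lift v (cokernel.π u))) :=
    (χ.toFun_cokernel_comp (cokernelIsCokernel u) v).trans (χ.toFun_pushout _ _)
  simp only [eval, h, χ.toFun_biprod]
  push_cast
  ring

lemma eval_le_eval_comp {A Y Z : C} (u : A ⟶ Y) (v : Y ⟶ Z) :
    χ.eval u ≤ χ.eval (u ≫ v) := by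
  rw [χ.eval_comp]
  linarith [χ.eval_nonneg (biprod.lift v (cokernel.π u))]

lemma eval_biprod_lift_le {A W B : C} (a : A ⟶ W) (f : A ⟶ B) :
    χ.eval (biprod.lift a f) ≤ χ.eval f := by
  simpa using χ.eval_le_eval_comp (biprod.lift a f) biprod.snd

lemma eval_biprod_lift_le_comp {A W W' B : C} (a : A ⟶ W) (u : W ⟶ W') (f : A ⟶ B) :
    χ.eval (biprod.lift a f) ≤ χ.eval (biprod.lift (a ≫ u) f) := by
  have h : biprod.lift a f ≫ biprod.map u (𝟙 B) = biprod.lift (a ≫ u) f := by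
    apply biprod.hom_ext <;> simp
  exact h ▸ χ.eval_le_eval_comp _ _

lemma eval_eq_eval_pushout_inr_add {A W B : C} (a : A ⟶ W) (f : A ⟶ B) :
    χ.eval a = χ.eval (pushout.inr a f) + χ.eval (biprod.lift a f) := by
  simp only [eval, χ.toFun_cokernel_pushout_inr, ← χ.toFun_pushout, χ.toFun_biprod]
  push_cast
  ring

lemma eval_comp_add_eval_pushout_inr {A B Y : C} {f : A ⟶ B} {c : CokernelCofork f}
    (hc : IsColimit c) (g : B ⟶ Y) :
    χ.eval (f ≫ g) + χ.eval (pushout.inr g c.π) = χ.eval g + χ.eval f := by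
  rw [χ.eval_eq_of_isColimit hc]
  simp only [eval, χ.toFun_cokernel_pushout_inr, χ.toFun_cokernel_comp hc]
  ring

end Character

inductive Character.Ascent (χ : Character C) {A : C} : ∀ {Y : C}, (A ⟶ Y) → ℕ → Prop
  | refl : χ.Ascent (𝟙 A) 0
  | flat {Y Z : C} {c : A ⟶ Y} {r : ℕ} (u : Y ⟶ Z) : χ.Ascent c r → χ.Ascent (c ≫ u) r
  | strict {Y Z : C} {c : A ⟶ Y} {r : ℕ} (u : Y ⟶ Z) : χ.Ascent c r →
      χ.eval c < χ.eval (c ≫ u) → χ.Ascent (c ≫ u) (r + 1)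

namespace Character.Ascent

variable {χ : Character C}

lemma zero {A Y : C} (c : A ⟶ Y) : χ.Ascent c 0 := by
  simpa using Ascent.flat (χ := χ) c .refl

lemma le_eval {A Y : C} {c : A ⟶ Y} {r : ℕ} (h : χ.Ascent c r) : (r : ℤ) ≤ χ.eval c := by
  induction h with
  | refl => rw [χ.eval_id]; rfl
  | flat u _ ih => exact ih.trans (χ.eval_le_eval_comp _ u)
  | strict u _ hlt ih => push_cast; omega

/-- An ascent on `B` splits along a right exact sequence `A → B → Q → 0`: every strict step of
`χ.eval c` is a strict step of `χ.eval (f ≫ c)` or of `χ.eval (pushout.inr c q)`, whose sum is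
`χ.eval c` up to a constant. -/
lemma split {A B Y : C} {f : A ⟶ B} {q : CokernelCofork f} (hq : IsColimit q)
    {c : B ⟶ Y} {r : ℕ} (h : χ.Ascent c r) :
    ∃ rA rQ, r ≤ rA + rQ ∧ χ.Ascent (f ≫ c) rA ∧ χ.Ascent (pushout.inr c q.π) rQ := by
  induction h with
  | refl => exact ⟨0, 0, le_rfl, zero _, zero _⟩
  | @flat _ _ c _ u _ ih =>
    obtain ⟨rA, rQ, hle, hA, hQ⟩ := ih
    obtain ⟨k, hk⟩ := exists_pushout_inr_comp c u q.π
    refine ⟨rA, rQ, hle, ?_, ?_⟩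
    · simpa using hA.flat u
    · exact hk ▸ hQ.flat k
  | @strict _ _ c _ u _ hlt ih =>
    obtain ⟨rA, rQ, hle, hA, hQ⟩ := ih
    obtain ⟨k, hk⟩ := exists_pushout_inr_comp c u q.π
    have hsum := χ.eval_comp_add_eval_pushout_inr hq c
    have hsum' := χ.eval_comp_add_eval_pushout_inr hq (c ≫ u)
    have monoA : χ.eval (f ≫ c) ≤ χ.eval (f ≫ c ≫ u) := by
      simpa using χ.eval_le_eval_comp (f ≫ c) u
    rw [hk] at hsum' ⊢
    rcases (χ.eval_le_eval_comp (pushout.inr c q.π) k).lt_or_eq with hQ' | hQ'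
    · exact ⟨rA, rQ + 1, by omega, by simpa using hA.flat u, hQ.strict k hQ'⟩
    · refine ⟨rA + 1, rQ, by omega, ?_, hQ.flat k⟩
      simpa using hA.strict u (by simp only [Category.assoc]; omega)

lemma pushout_inr {A B W : C} (f : A ⟶ B) {a : A ⟶ W} {r : ℕ} (h : χ.Ascent a r) :
    ∃ r', χ.Ascent (pushout.inr a f) r' ∧ (r : ℤ) ≤ r' + χ.eval (biprod.lift a f) := by
  induction h with
  | refl => exact ⟨0, zero _, by simpa using χ.eval_nonneg (biprod.lift (𝟙 A) f)⟩
  | @flat _ _ c _ u _ ih =>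
    obtain ⟨r', hr', hle⟩ := ih
    obtain ⟨k, hk⟩ := exists_pushout_inr_comp c u f
    have monoL := χ.eval_biprod_lift_le_comp c u f
    exact ⟨r', hk ▸ hr'.flat k, by omega⟩
  | @strict _ _ c _ u _ hlt ih =>
    obtain ⟨r', hr', hle⟩ := ih
    obtain ⟨k, hk⟩ := exists_pushout_inr_comp c u f
    have monoL := χ.eval_biprod_lift_le_comp c u f
    have hsum := χ.eval_eq_eval_pushout_inr_add c f
    have hsum' := χ.eval_eq_eval_pushout_inr_add (c ≫ u) f
    rw [hk] at hsum' ⊢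
    rcases (χ.eval_le_eval_comp (pushout.inr c f) k).lt_or_eq with hlt' | heq
    · exact ⟨r' + 1, hr'.strict k hlt', by push_cast; omega⟩
    · exact ⟨r', hr'.flat k, by push_cast; omega⟩

lemma epi_comp {B P Q Z : C} (q : B ⟶ Q) [Epi q] {g : B ⟶ P} {r : ℕ} (hg : χ.Ascent g r)
    (t : P ⟶ Q) (hgt : g ≫ t = q) {d : Q ⟶ Z} {s : ℕ} (hd : χ.Ascent d s) :
    ∃ r', r + s ≤ r' ∧ χ.Ascent (q ≫ d) r' := by
  induction hd with
  | refl => exact ⟨r, le_rfl, by simpa [hgt] using hg.flat t⟩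
  | flat u _ ih =>
    obtain ⟨r', hle, hr'⟩ := ih
    exact ⟨r', hle, by simpa using hr'.flat u⟩
  | @strict _ _ d _ u _ hlt ih =>
    obtain ⟨r', hle, hr'⟩ := ih
    refine ⟨r' + 1, by omega, ?_⟩
    have h := hr'.strict u (by rw [Category.assoc, χ.eval_epi_comp, χ.eval_epi_comp]; omega)
    simpa using h

end Character.Ascent

namespace Character

variable (χ : Character C)

def ascentLengths (A : C) : Set ℕ :=
  {r | ∃ (Y : C) (c : A ⟶ Y), χ.Ascent c r}

/-- The supremum is attained: `χ.eval` takes values in `[0, χ A]`, which bounds all ascents. -/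
noncomputable def ascentRank (A : C) : ℕ :=
  sSup (χ.ascentLengths A)

lemma bddAbove_ascentLengths (A : C) : BddAbove (χ.ascentLengths A) := by
  refine ⟨χ.toFun A, ?_⟩
  rintro r ⟨Y, c, hc⟩
  have := hc.le_eval.trans (χ.eval_le c)
  omega

lemma exists_ascent_ascentRank (A : C) : ∃ (Y : C) (c : A ⟶ Y), χ.Ascent c (χ.ascentRank A) :=
  Nat.sSup_mem (s := χ.ascentLengths A) ⟨0, A, 𝟙 A, .refl⟩ (χ.bddAbove_ascentLengths A)

variable {χ} in
lemma Ascent.le_ascentRank {A Y : C} {c : A ⟶ Y} {r : ℕ} (h : χ.Ascent c r) :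
    r ≤ χ.ascentRank A :=
  le_csSup (χ.bddAbove_ascentLengths A) ⟨Y, c, h⟩

lemma ascentRank_le (A : C) : χ.ascentRank A ≤ χ.toFun A := by
  obtain ⟨Y, c, hc⟩ := χ.exists_ascent_ascentRank A
  have := hc.le_eval.trans (χ.eval_le c)
  omega

lemma one_le_ascentRank {B : C} (hB : χ.toFun B ≠ 0) : 1 ≤ χ.ascentRank B := by
  have hlt : χ.eval (𝟙 B) < χ.eval (𝟙 B ≫ (0 : B ⟶ 0)) := by
    rw [Category.id_comp, χ.eval_id, χ.eval_of_epi (0 : B ⟶ 0), χ.toFun_zero]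
    omega
  exact (Ascent.refl.strict _ hlt).le_ascentRank

lemma ascentRank_le_add {A B : C} (f : A ⟶ B) (c : CokernelCofork f) (hc : IsColimit c) :
    χ.ascentRank B ≤ χ.ascentRank A + χ.ascentRank c.pt := by
  obtain ⟨Y, g, hg⟩ := χ.exists_ascent_ascentRank B
  obtain ⟨rA, rQ, hle, hA, hQ⟩ := hg.split hc
  have := hA.le_ascentRank
  have := hQ.le_ascentRank
  omega

/-- The defect `χ.eval f` bounds the failure of additivity on `A → B → Q → 0`: an ascent
on `A` is pushed out along `f` and continued by an ascent on `Q`. -/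
lemma ascentRank_add_le {A B : C} (f : A ⟶ B) (c : CokernelCofork f) (hc : IsColimit c) :
    (χ.ascentRank A : ℤ) + χ.ascentRank c.pt ≤ χ.ascentRank B + χ.eval f := by
  have : Epi c.π := epi_of_isColimit_cofork hc
  obtain ⟨W, a, ha⟩ := χ.exists_ascent_ascentRank A
  obtain ⟨Z, d, hd⟩ := χ.exists_ascent_ascentRank c.pt
  obtain ⟨rg, hg, hle⟩ := ha.pushout_inr f
  obtain ⟨r, hr, hB⟩ :=
    hg.epi_comp c.π (pushout.desc 0 c.π (by simp)) (pushout.inr_desc _ _ _) hd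
  have := hB.le_ascentRank
  have := χ.eval_biprod_lift_le a f
  omega

lemma ascentRank_bicone {X Y : C} (b : BinaryBicone X Y) (hb : b.IsBilimit) :
    χ.ascentRank b.pt = χ.ascentRank X + χ.ascentRank Y := by
  have hc := b.isColimitInlCokernelCofork hb.isColimit
  have hle := χ.ascentRank_le_add b.inl _ hc
  have hge := χ.ascentRank_add_le b.inl _ hc
  rw [χ.eval_eq_of_isColimit hc, χ.additive X Y b hb] at hge
  simp only [BinaryBicone.inlCokernelCofork, Cofork.ofπ_pt] at hle hge
  push_cast at hge
  omega

noncomputable def ascentRankChar : Character C where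
  toFun := χ.ascentRank
  additive _ _ b hb := χ.ascentRank_bicone b hb
  subadditive _ _ f c hc := χ.ascentRank_le_add f c hc

noncomputable def ascentCorankChar : Character C where
  toFun A := χ.toFun A - χ.ascentRank A
  additive X Y b hb := by
    have := χ.additive X Y b hb
    have := χ.ascentRank_bicone b hb
    have := χ.ascentRank_le X
    have := χ.ascentRank_le Y
    omega
  subadditive X Y f c hc := by
    have := χ.ascentRank_add_le f c hc
    have := χ.eval_eq_of_isColimit hc
    have := χ.ascentRank_le X
    have := χ.ascentRank_le Y
    have := χ.ascentRank_le c.pt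
    omega

/-- An irreducible character is its own ascent rank: otherwise it would split as
`ascentRankChar + ascentCorankChar`, with both summands nonzero. -/
lemma ascentRank_eq_of_isIrreducible (hχ : χ.IsIrreducible) (A : C) :
    χ.ascentRank A = χ.toFun A := by
  by_contra hne
  obtain ⟨B, hB⟩ := Function.ne_iff.mp hχ.1
  refine hχ.2 ⟨χ.ascentRankChar, χ.ascentCorankChar, Function.ne_iff.mpr ⟨B, ?_⟩,
    Function.ne_iff.mpr ⟨A, ?_⟩, fun X => ?_⟩
  · have := χ.one_le_ascentRank hB
    simp only [ascentRankChar, Pi.zero_apply]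
    omega
  · have := χ.ascentRank_le A
    simp only [ascentCorankChar, Pi.zero_apply]
    omega
  · have := χ.ascentRank_le X
    simp only [ascentRankChar, ascentCorankChar]
    omega

end Character

section Topology

open Topology

attribute [local instance] spTopology

lemma isOpen_setOf_eval_ne_zero {X Y : C} (α : X ⟶ Y) : IsOpen {χ : Sp C | χ.1.eval α ≠ 0} :=
  .basic _ ⟨X, Y, α, rfl⟩

lemma Character.Ascent.eventually_le_eval {χ : Sp C} {A Y : C} {c : A ⟶ Y} {r : ℕ}
    (h : χ.1.Ascent c r) : ∀ᶠ χ' in 𝓝 χ, (r : ℤ) ≤ χ'.1.eval c := by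
  induction h with
  | refl => exact .of_forall fun χ' => by simp [χ'.1.eval_id]
  | flat u _ ih => exact ih.mono fun χ' h => h.trans (χ'.1.eval_le_eval_comp _ u)
  | @strict _ _ c _ u _ hlt ih =>
    have hα : χ.1.eval (biprod.lift u (cokernel.π c)) ≠ 0 := by
      rw [χ.1.eval_comp] at hlt
      omega
    filter_upwards [ih, (isOpen_setOf_eval_ne_zero _).mem_nhds hα] with χ' hr hα'
    have := χ'.1.eval_nonneg (biprod.lift u (cokernel.π c))
    rw [χ'.1.eval_comp]
    push_cast
    omega

theorem lowerSemicontinuous_toFun (X : C) :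
    LowerSemicontinuous fun χ : Sp C => χ.1.toFun X := by
  intro χ m (hm : m < χ.1.toFun X)
  obtain ⟨Y, c, hc⟩ := χ.1.exists_ascent_ascentRank X
  rw [χ.1.ascentRank_eq_of_isIrreducible χ.2] at hc
  filter_upwards [hc.eventually_le_eval] with χ' h
  have := χ'.1.eval_le c
  omega

end Topology

theorem statement2_general (C : Type u) [Category.{v} C] [Abelian C]
    (ι : Type) [Fintype ι] (S : ι → C) (n : ℕ) :
    @IsClosed (Sp C) (spTopology C) {χ : Sp C | ∑ i, χ.1.toFun (S i) ≤ n} :=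
  letI := spTopology C
  (lowerSemicontinuous_sum fun i _ => lowerSemicontinuous_toFun (S i)).isClosed_preimage n

/-- For every `n ∈ ℕ`, the subset `V_n = {χ ∈ Sp C | deg χ ≤ n}` is closed in `Sp C`;
here `deg χ = ∑ᵢ χ(Sᵢ)` for a set of representatives `Sᵢ` of the isomorphism classes
of simple objects of `C`. -/
theorem statement2 (k : Type w) [CommRing k] (C : Type u) [Category.{v} C] [Abelian C]
    [Linear k C] (hC : LengthCategory C k)
    (ι : Type) [Fintype ι] (S : ι → C) (hS : ∀ i, Simple (S i))
    (hSrep : ∀ X : C, Simple X → ∃ i, Nonempty (X ≅ S i))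
    (hSdistinct : ∀ i j, i ≠ j → IsEmpty (S i ≅ S j)) (n : ℕ) :
    @IsClosed (Sp C) (spTopology C) {χ : Sp C | ∑ i, χ.1.toFun (S i) ≤ n} :=
  statement2_general C ι S n

end BrauerThrall
end

section
/- Let D ⊆ C be a subobject-closed full additive subcategory. Then for every object X of C there is a smallest subobject U ⊆ X with X/U ∈ D, and the inclusion functor D → C admits a left adjoint sending X to X/U. -/
open CategoryTheory CategoryTheory.Limits ZeroObject

universe w v u

namespace BrauerThrall

variable {D : Type u} [Category.{v} D] [HasZeroMorphisms D]

variable {C : Type u} [Category.{v} C] [Abelian C]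

/-- A full subcategory of a preadditive category is preadditive. -/
instance fullSubcategoryPreadditive {E : Type u} [Category.{v} E] [Preadditive E]
    (P : E → Prop) : Preadditive (ObjectProperty.FullSubcategory P) where
  homGroup X Y := InducedCategory.homEquiv.addCommGroup
  add_comp _ _ _ f f' g := by ext; exact Preadditive.add_comp _ _ _ _ _ _
  comp_add _ _ _ f g g' := by ext; exact Preadditive.comp_add _ _ _ _ _ _

variable {C : Type u} [Category.{v} C] [Abelian C]

variable (C) in
/-- A subobject-closed full additive subcategory of `C`, given by its class of
objects: it contains `0`, is closed under finite direct sums, and contains every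
subobject of each of its objects. -/
def IsSubobjectClosedSubcat (D : Set C) : Prop :=
  (0 : C) ∈ D ∧ (∀ X Y : C, X ∈ D → Y ∈ D → (X ⊞ Y) ∈ D) ∧
    ∀ (X Y : C) (f : X ⟶ Y), Mono f → Y ∈ D → X ∈ D

/-- The image of `Sp D` in `Sp C`, for a subobject-closed subcategory `D ⊆ C` with
`p : C ⥤ D` the left adjoint of the inclusion: the irreducible characters of the form
`χ ∘ p` with `χ` an irreducible character for `D`. -/
def pushSet (D : Set C) (p : C ⥤ ObjectProperty.FullSubcategory (· ∈ D)) : Set (Sp C) :=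
  {χ : Sp C | ∃ ψ : Character (ObjectProperty.FullSubcategory (· ∈ D)), ψ.IsIrreducible ∧
    ∀ X : C, χ.1.toFun X = ψ.toFun (p.obj X)}

variable (C) in
/-- A subset `U ⊆ Sp C` is subobject-closed if `U = Sp D` for some subobject-closed
additive subcategory `D ⊆ C` (identified with a subset of `Sp C` via `χ ↦ χ ∘ p`). -/
def IsSubobjectClosedSubset (U : Set (Sp C)) : Prop :=
  ∃ D : Set C, IsSubobjectClosedSubcat C D ∧
    ∃ (p : C ⥤ ObjectProperty.FullSubcategory (· ∈ D)) (_ : p ⊣ ObjectProperty.ι (· ∈ D)),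
      U = pushSet D p

/-- `sub χ`: the intersection of all subobject-closed subsets of `Sp C` containing
`χ`. -/
def subChar (χ : Sp C) : Set (Sp C) :=
  ⋂₀ {U : Set (Sp C) | IsSubobjectClosedSubset C U ∧ χ ∈ U}

/-! If `X/U` and `X/V` lie in `D`, so does `X/W` for `W ≤ U ⊓ V` the kernel of
`X ⟶ X/U ⊞ X/V`, as `X/W` embeds into `X/U ⊞ X/V`. Hence a minimal subobject with quotient
in `D`, which exists because `X` is artinian, is the least one. Every morphism from `X` to an
object of `D` has its coimage in `D`, so it kills that least `U` and factors uniquely through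
`X ⟶ X/U`: this makes `X ↦ X/U` a left adjoint of the inclusion. -/

lemma Subobject.le_of_arrow_comp_cokernel_π_eq_zero {X : C} {U W : Subobject X}
    (h : W.arrow ≫ cokernel.π U.arrow = 0) : W ≤ U := by
  have hU := Abelian.monoIsKernelOfCokernel _ (cokernelIsCokernel U.arrow)
  obtain ⟨l, hl⟩ := KernelFork.IsLimit.lift' hU W.arrow h
  exact Subobject.le_of_comm l hl

noncomputable def cokernelKernelSubobjectIsoCoimage {X Y : C} (g : X ⟶ Y) :
    cokernel (kernelSubobject g).arrow ≅ Abelian.coimage g :=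
  cokernelIsoOfEq (kernelSubobject_arrow g).symm ≪≫
    cokernelEpiComp (kernelSubobjectIso g).hom (kernel.ι g)

namespace IsSubobjectClosedSubcat

variable {D : Set C}

lemma mem_of_iso (hD : IsSubobjectClosedSubcat C D) {A B : C} (e : A ≅ B) (hB : B ∈ D) :
    A ∈ D :=
  hD.2.2 A B e.hom inferInstance hB

lemma cokernel_top_arrow_mem (hD : IsSubobjectClosedSubcat C D) (X : C) :
    cokernel (⊤ : Subobject X).arrow ∈ D :=
  hD.mem_of_iso (cokernel.ofEpi _) hD.1

lemma cokernel_kernelSubobject_arrow_mem (hD : IsSubobjectClosedSubcat C D) {X T : C}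
    (g : X ⟶ T) (hT : T ∈ D) : cokernel (kernelSubobject g).arrow ∈ D :=
  hD.mem_of_iso (cokernelKernelSubobjectIsoCoimage g)
    (hD.2.2 _ T (Abelian.factorThruCoimage g) inferInstance hT)

lemma exists_le_le_cokernel_arrow_mem (hD : IsSubobjectClosedSubcat C D) {X : C}
    {U V : Subobject X} (hU : cokernel U.arrow ∈ D) (hV : cokernel V.arrow ∈ D) :
    ∃ W : Subobject X, W ≤ U ∧ W ≤ V ∧ cokernel W.arrow ∈ D := by
  let g : X ⟶ cokernel U.arrow ⊞ cokernel V.arrow :=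
    biprod.lift (cokernel.π U.arrow) (cokernel.π V.arrow)
  refine ⟨kernelSubobject g, ?_, ?_, hD.cokernel_kernelSubobject_arrow_mem g (hD.2.1 _ _ hU hV)⟩
  · refine Subobject.le_of_arrow_comp_cokernel_π_eq_zero ?_
    rw [← biprod.lift_fst (cokernel.π U.arrow) (cokernel.π V.arrow), ← Category.assoc,
      kernelSubobject_arrow_comp, zero_comp]
  · refine Subobject.le_of_arrow_comp_cokernel_π_eq_zero ?_
    rw [← biprod.lift_snd (cokernel.π U.arrow) (cokernel.π V.arrow), ← Category.assoc,
      kernelSubobject_arrow_comp, zero_comp]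

lemma exists_isLeast_cokernel_arrow_mem (hD : IsSubobjectClosedSubcat C D) (X : C)
    [IsArtinianObject X] : ∃ U : Subobject X, IsLeast {V | cokernel V.arrow ∈ D} U := by
  obtain ⟨U, hU, hmin⟩ := (wellFounded_lt (α := Subobject X)).has_min
    {V | cokernel V.arrow ∈ D} ⟨⊤, hD.cokernel_top_arrow_mem X⟩
  refine ⟨U, hU, fun V hV => ?_⟩
  obtain ⟨W, hWU, hWV, hW⟩ := hD.exists_le_le_cokernel_arrow_mem hU hV
  obtain rfl : W = U := hWU.lt_or_eq.resolve_left (hmin W hW)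
  exact hWV

lemma arrow_comp_eq_zero_of_isLeast (hD : IsSubobjectClosedSubcat C D) {X T : C} {U : Subobject X}
    (hU : IsLeast {V | cokernel V.arrow ∈ D} U) (f : X ⟶ T) (hT : T ∈ D) : U.arrow ≫ f = 0 := by
  rw [← Subobject.ofLE_arrow (hU.2 (hD.cokernel_kernelSubobject_arrow_mem f hT)),
    Category.assoc, kernelSubobject_arrow_comp, comp_zero]

end IsSubobjectClosedSubcat

section Reflector

variable {D : Set C} {U : ∀ X : C, Subobject X}

noncomputable def reflectorHomEquiv (hD : IsSubobjectClosedSubcat C D)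
    (hU : ∀ X, IsLeast {V : Subobject X | cokernel V.arrow ∈ D} (U X)) (X : C)
    (Y : ObjectProperty.FullSubcategory (· ∈ D)) :
    ((⟨cokernel (U X).arrow, (hU X).1⟩ : ObjectProperty.FullSubcategory (· ∈ D)) ⟶ Y) ≃
      (X ⟶ (ObjectProperty.ι (· ∈ D)).obj Y) where
  toFun h := cokernel.π (U X).arrow ≫ h.hom
  invFun f := ObjectProperty.homMk
    (cokernel.desc _ f (hD.arrow_comp_eq_zero_of_isLeast (hU X) f Y.property))
  left_inv h := by
    ext
    exact cokernel.π_desc _ _ _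
  right_inv f := cokernel.π_desc _ _ _

noncomputable def reflector (hD : IsSubobjectClosedSubcat C D)
    (hU : ∀ X, IsLeast {V : Subobject X | cokernel V.arrow ∈ D} (U X)) :
    C ⥤ ObjectProperty.FullSubcategory (· ∈ D) :=
  Adjunction.leftAdjointOfEquiv (reflectorHomEquiv hD hU) fun _ _ _ _ _ =>
    (Category.assoc _ _ _).symm

noncomputable def reflectorAdjunction (hD : IsSubobjectClosedSubcat C D)
    (hU : ∀ X, IsLeast {V : Subobject X | cokernel V.arrow ∈ D} (U X)) :
    reflector hD hU ⊣ ObjectProperty.ι (· ∈ D) :=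
  Adjunction.adjunctionOfEquivLeft _ _

end Reflector

theorem statement9_general
    (hArt : ∀ X : C, IsArtinianObject X)
    (D : Set C) (hD : IsSubobjectClosedSubcat C D) :
    (∀ X : C, ∃ U : Subobject X, cokernel U.arrow ∈ D ∧
      ∀ V : Subobject X, cokernel V.arrow ∈ D → U ≤ V) ∧
    ∃ (p : C ⥤ ObjectProperty.FullSubcategory (· ∈ D)) (_ : p ⊣ ObjectProperty.ι (· ∈ D)),
      ∀ (X : C) (U : Subobject X), cokernel U.arrow ∈ D →
        (∀ V : Subobject X, cokernel V.arrow ∈ D → U ≤ V) →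
        Nonempty ((p.obj X).obj ≅ cokernel U.arrow) := by
  choose U hU using fun X => haveI := hArt X; hD.exists_isLeast_cokernel_arrow_mem X
  refine ⟨fun X => ⟨U X, (hU X).1, fun V hV => (hU X).2 hV⟩,
    reflector hD hU, reflectorAdjunction hD hU, ?_⟩
  intro X V hV hV_least
  obtain rfl : U X = V := (hU X).unique ⟨hV, fun W hW => hV_least W hW⟩
  exact ⟨Iso.refl _⟩

/-- For a subobject-closed full additive subcategory `D ⊆ C`, every object `X` of `C`
has a smallest subobject `U ⊆ X` with `X/U ∈ D`, and the inclusion `D ⥤ C` admits a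
left adjoint sending `X` to `X/U`. -/
theorem statement9 (k : Type w) [CommRing k] [Linear k C]
    (hNoeth : ∀ X : C, IsNoetherianObject X) (hArt : ∀ X : C, IsArtinianObject X)
    (hHom : ∀ X Y : C, IsFiniteLength k (X ⟶ Y))
    (D : Set C) (hD : IsSubobjectClosedSubcat C D) :
    (∀ X : C, ∃ U : Subobject X, cokernel U.arrow ∈ D ∧
      ∀ V : Subobject X, cokernel V.arrow ∈ D → U ≤ V) ∧
    ∃ (p : C ⥤ ObjectProperty.FullSubcategory (· ∈ D)) (_ : p ⊣ ObjectProperty.ι (· ∈ D)),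
      ∀ (X : C) (U : Subobject X), cokernel U.arrow ∈ D →
        (∀ V : Subobject X, cokernel V.arrow ∈ D → U ≤ V) →
        Nonempty ((p.obj X).obj ≅ cokernel U.arrow) :=
  statement9_general hArt D hD

end BrauerThrall
end
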